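/- Finite-time convergence for deep GRUs (Lemma 4): consider the deep GRU with M layers driven by an input sequence u with ‖u(t)‖_∞ ≤ 1 for all t, from arbitrary layer initial states x̄^i ∈ ℝ^{n_x^i}. Then (a) for each layer i and each time k at which ‖x^i(k)‖_∞ > 1 it holds that ‖x^i(k+1)‖_∞ < ‖x^i(k)‖_∞, and (b) there exists a finite k̄ ≥ 0, depending only on the initial states and the weights, such that ‖x^i(k)‖_∞ ≤ 1 for all layers i and all k ≥ k̄. -/

import Mathlib

open Real Filter

/-- The sigmoid activation function. -/
noncomputable def sigmoid (s : ℝ) : ℝ := 1 / (1 + Real.exp (-s))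

/-- Induced infinity norm of a matrix (maximum absolute row sum). -/
noncomputable def matNorm {n m : ℕ} (A : Matrix (Fin n) (Fin m) ℝ) : ℝ :=
  ⨆ i, ∑ j, |A i j|

/-- Infinity norm of the horizontal concatenation `[A B c]`
(maximum absolute row sum of the concatenated matrix). -/
noncomputable def catNorm {n m p : ℕ} (A : Matrix (Fin n) (Fin m) ℝ)
    (B : Matrix (Fin n) (Fin p) ℝ) (c : Fin n → ℝ) : ℝ :=
  ⨆ i, (∑ j, |A i j| + ∑ j, |B i j| + |c i|)

/-- One step of the single-layer GRU:
`x⁺ = z ∘ x + (1 - z) ∘ tanh(W_r u + U_r (f ∘ x) + b_r)`,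
`z = σ(W_z u + U_z x + b_z)`, `f = σ(W_f u + U_f x + b_f)`. -/
noncomputable def gruStep {nu nx : ℕ}
    (Wz Wf Wr : Matrix (Fin nx) (Fin nu) ℝ)
    (Uz Uf Ur : Matrix (Fin nx) (Fin nx) ℝ)
    (bz bf br : Fin nx → ℝ)
    (u : Fin nu → ℝ) (x : Fin nx → ℝ) : Fin nx → ℝ :=
  let z : Fin nx → ℝ := fun i => _root_.sigmoid ((Wz.mulVec u + Uz.mulVec x + bz) i)
  let f : Fin nx → ℝ := fun i => _root_.sigmoid ((Wf.mulVec u + Uf.mulVec x + bf) i)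
  let r : Fin nx → ℝ := fun i => Real.tanh ((Wr.mulVec u + Ur.mulVec (f * x) + br) i)
  fun j => z j * x j + (1 - z j) * r j

/-- Input dimension of layer `i` of a deep GRU: the first layer is fed by the
external input (dimension `nu`), layer `i+1` is fed by the state of layer `i`. -/
def inDim (nu : ℕ) (n : ℕ → ℕ) : ℕ → ℕ
  | 0 => nu
  | i + 1 => n i

/-!
Every coordinate of a GRU step is a convex combination `z * x j + (1 - z) * r` of the old
coordinate and a candidate `r = tanh (…)`, `|r| < 1`, with gate `z = σ (…) ∈ (0, 1)`. Hence the
sup norm strictly decreases while it exceeds `1`, and never exceeds `max ‖x 0‖ 1`. These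
a-priori bounds, passed from layer to layer, bound the arguments of `σ` and `tanh` uniformly in
time and in the input, so that `z ≤ c < 1` and `|r| ≤ ρ < 1` with `c`, `ρ` depending only on the
weights and the initial states. Then `max ‖x k‖ 1 - ρ` decays at least like `c ^ k` until it
drops to `1 - ρ`, that is, until `‖x k‖ ≤ 1`.
-/

open Matrix Topology

lemma sigmoid_eq_real_sigmoid : _root_.sigmoid = Real.sigmoid :=
  funext fun _ => one_div _

namespace Real

lemma tanh_strictMono : StrictMono tanh := by
  intro s t hst
  rw [tanh_eq_sinh_div_cosh, tanh_eq_sinh_div_cosh, div_lt_div_iff₀ (cosh_pos s) (cosh_pos t)]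
  have h : sinh (s - t) < sinh 0 := sinh_lt_sinh.2 (sub_neg.2 hst)
  rw [sinh_sub, sinh_zero] at h
  linarith

lemma tanh_nonneg {x : ℝ} (hx : 0 ≤ x) : 0 ≤ tanh x :=
  tanh_zero ▸ tanh_strictMono.monotone hx

lemma abs_tanh (x : ℝ) : |tanh x| = tanh |x| := by
  rcases le_total 0 x with hx | hx
  · rw [abs_of_nonneg hx, abs_of_nonneg (tanh_nonneg hx)]
  · have h := tanh_nonneg (neg_nonneg.2 hx)
    rw [tanh_neg] at h
    rw [abs_of_nonpos hx, abs_of_nonpos (neg_nonneg.1 h), tanh_neg]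

end Real

section MatNorm

attribute [local instance] Matrix.linftyOpSeminormedAddCommGroup

lemma matNorm_eq_linfty_opNorm {n m : ℕ} (A : Matrix (Fin n) (Fin m) ℝ) : matNorm A = ‖A‖ := by
  have h : ‖A‖ = ((Finset.univ.sup fun i => ∑ j, ‖A i j‖₊ : NNReal) : ℝ) :=
    Matrix.linfty_opNorm_def A
  rw [h, Finset.sup_univ_eq_ciSup, NNReal.coe_iSup, matNorm]
  simp [NNReal.coe_sum]

lemma matNorm_nonneg {n m : ℕ} (A : Matrix (Fin n) (Fin m) ℝ) : 0 ≤ matNorm A :=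
  matNorm_eq_linfty_opNorm A ▸ norm_nonneg A

lemma norm_mulVec_le_matNorm_mul {n m : ℕ} (A : Matrix (Fin n) (Fin m) ℝ) (v : Fin m → ℝ) :
    ‖A *ᵥ v‖ ≤ matNorm A * ‖v‖ :=
  matNorm_eq_linfty_opNorm A ▸ Matrix.linfty_opNorm_mulVec A v

end MatNorm

lemma norm_mulVec_add_mulVec_add_le {n m p : ℕ} (W : Matrix (Fin n) (Fin m) ℝ)
    (U : Matrix (Fin n) (Fin p) ℝ) (b : Fin n → ℝ) {u : Fin m → ℝ} {x : Fin p → ℝ} {a B : ℝ}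
    (hu : ‖u‖ ≤ a) (hx : ‖x‖ ≤ B) :
    ‖W *ᵥ u + U *ᵥ x + b‖ ≤ matNorm W * a + matNorm U * B + ‖b‖ := by
  refine (norm_add₃_le).trans ?_
  gcongr
  · exact (norm_mulVec_le_matNorm_mul W u).trans (mul_le_mul_of_nonneg_left hu (matNorm_nonneg W))
  · exact (norm_mulVec_le_matNorm_mul U x).trans (mul_le_mul_of_nonneg_left hx (matNorm_nonneg U))

lemma abs_convex_comb_le {z a r c ρ V : ℝ} (hz0 : 0 ≤ z) (hz1 : z ≤ 1) (hzc : z ≤ c)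
    (ha : |a| ≤ V) (hr : |r| ≤ ρ) (hρV : ρ ≤ V) :
    |z * a + (1 - z) * r| ≤ ρ + c * (V - ρ) :=
  calc |z * a + (1 - z) * r| ≤ z * |a| + (1 - z) * |r| := by
        refine (abs_add_le _ _).trans_eq ?_
        rw [abs_mul, abs_mul, abs_of_nonneg hz0, abs_of_nonneg (sub_nonneg.2 hz1)]
    _ ≤ z * V + (1 - z) * ρ := by gcongr
    _ = ρ + z * (V - ρ) := by ring
    _ ≤ ρ + c * (V - ρ) := by gcongr

section GRUStep

variable {nu nx : ℕ}

noncomputable def gruGate (W : Matrix (Fin nx) (Fin nu) ℝ) (U : Matrix (Fin nx) (Fin nx) ℝ)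
    (b : Fin nx → ℝ) (u : Fin nu → ℝ) (x : Fin nx → ℝ) : Fin nx → ℝ :=
  fun j => _root_.sigmoid ((W *ᵥ u + U *ᵥ x + b) j)

noncomputable def gruCandidate (Wf Wr : Matrix (Fin nx) (Fin nu) ℝ)
    (Uf Ur : Matrix (Fin nx) (Fin nx) ℝ) (bf br : Fin nx → ℝ) (u : Fin nu → ℝ)
    (x : Fin nx → ℝ) : Fin nx → ℝ :=
  fun j => tanh ((Wr *ᵥ u + Ur *ᵥ (gruGate Wf Uf bf u x * x) + br) j)

variable (Wz Wf Wr : Matrix (Fin nx) (Fin nu) ℝ) (Uz Uf Ur : Matrix (Fin nx) (Fin nx) ℝ)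
  (bz bf br : Fin nx → ℝ)

lemma gruStep_apply (u : Fin nu → ℝ) (x : Fin nx → ℝ) (j : Fin nx) :
    gruStep Wz Wf Wr Uz Uf Ur bz bf br u x j =
      gruGate Wz Uz bz u x j * x j +
        (1 - gruGate Wz Uz bz u x j) * gruCandidate Wf Wr Uf Ur bf br u x j :=
  rfl

lemma gruGate_pos (u : Fin nu → ℝ) (x : Fin nx → ℝ) (j : Fin nx) : 0 < gruGate Wz Uz bz u x j := by
  simpa [gruGate, sigmoid_eq_real_sigmoid] using Real.sigmoid_pos _

lemma gruGate_lt_one (u : Fin nu → ℝ) (x : Fin nx → ℝ) (j : Fin nx) :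
    gruGate Wz Uz bz u x j < 1 := by
  simpa [gruGate, sigmoid_eq_real_sigmoid] using Real.sigmoid_lt_one _

lemma gruGate_le {u : Fin nu → ℝ} {x : Fin nx → ℝ} {a B : ℝ} (hu : ‖u‖ ≤ a) (hx : ‖x‖ ≤ B)
    (j : Fin nx) :
    gruGate Wz Uz bz u x j ≤ Real.sigmoid (matNorm Wz * a + matNorm Uz * B + ‖bz‖) := by
  rw [gruGate, sigmoid_eq_real_sigmoid]
  refine Real.sigmoid_le ((le_abs_self _).trans ?_)
  exact (norm_le_pi_norm _ j).trans (norm_mulVec_add_mulVec_add_le Wz Uz bz hu hx)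

lemma norm_gruGate_mul_le (u : Fin nu → ℝ) (x : Fin nx → ℝ) : ‖gruGate Wf Uf bf u x * x‖ ≤ ‖x‖ := by
  refine (pi_norm_le_iff_of_nonneg (norm_nonneg x)).2 fun j => ?_
  rw [Pi.mul_apply, norm_mul, Real.norm_of_nonneg (gruGate_pos Wf Uf bf u x j).le]
  exact (mul_le_of_le_one_left (norm_nonneg _) (gruGate_lt_one Wf Uf bf u x j).le).trans
    (norm_le_pi_norm x j)

lemma abs_gruCandidate_lt_one (u : Fin nu → ℝ) (x : Fin nx → ℝ) (j : Fin nx) :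
    |gruCandidate Wf Wr Uf Ur bf br u x j| < 1 :=
  Real.abs_tanh_lt_one _

lemma abs_gruCandidate_le {u : Fin nu → ℝ} {x : Fin nx → ℝ} {a B : ℝ} (hu : ‖u‖ ≤ a)
    (hx : ‖x‖ ≤ B) (j : Fin nx) :
    |gruCandidate Wf Wr Uf Ur bf br u x j| ≤ tanh (matNorm Wr * a + matNorm Ur * B + ‖br‖) := by
  rw [gruCandidate, Real.abs_tanh, ← Real.norm_eq_abs]
  refine Real.tanh_strictMono.monotone ((norm_le_pi_norm _ j).trans ?_)
  exact norm_mulVec_add_mulVec_add_le Wr Ur br hu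
    ((norm_gruGate_mul_le Wf Uf bf u x).trans hx)

lemma norm_gruStep_lt (u : Fin nu → ℝ) {x : Fin nx → ℝ} (hx : 1 < ‖x‖) :
    ‖gruStep Wz Wf Wr Uz Uf Ur bz bf br u x‖ < ‖x‖ := by
  refine (pi_norm_lt_iff (one_pos.trans hx)).2 fun j => ?_
  set z := gruGate Wz Uz bz u x j
  set r := gruCandidate Wf Wr Uf Ur bf br u x j
  have hz0 : 0 < z := gruGate_pos Wz Uz bz u x j
  have hz1 : z < 1 := gruGate_lt_one Wz Uz bz u x j
  have hr : |r| < ‖x‖ := (abs_gruCandidate_lt_one Wf Wr Uf Ur bf br u x j).trans hx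
  rw [gruStep_apply, Real.norm_eq_abs]
  calc |z * x j + (1 - z) * r| ≤ |r| + z * (‖x‖ - |r|) :=
        abs_convex_comb_le hz0.le hz1.le le_rfl (norm_le_pi_norm x j) le_rfl hr.le
    _ < ‖x‖ := by nlinarith

lemma norm_gruStep_le_of_forall_le {u : Fin nu → ℝ} {x : Fin nx → ℝ} {c ρ V : ℝ}
    (hz : ∀ j, gruGate Wz Uz bz u x j ≤ c) (hr : ∀ j, |gruCandidate Wf Wr Uf Ur bf br u x j| ≤ ρ)
    (hc : 0 ≤ c) (hρ : 0 ≤ ρ) (hx : ‖x‖ ≤ V) (hρV : ρ ≤ V) :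
    ‖gruStep Wz Wf Wr Uz Uf Ur bz bf br u x‖ ≤ ρ + c * (V - ρ) := by
  refine (pi_norm_le_iff_of_nonneg (by nlinarith)).2 fun j => ?_
  rw [gruStep_apply, Real.norm_eq_abs]
  exact abs_convex_comb_le (gruGate_pos Wz Uz bz u x j).le (gruGate_lt_one Wz Uz bz u x j).le
    (hz j) ((norm_le_pi_norm x j).trans hx) (hr j) hρV

lemma norm_gruStep_le_max (u : Fin nu → ℝ) (x : Fin nx → ℝ) :
    ‖gruStep Wz Wf Wr Uz Uf Ur bz bf br u x‖ ≤ max ‖x‖ 1 := by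
  have h := norm_gruStep_le_of_forall_le Wz Wf Wr Uz Uf Ur bz bf br
    (fun j => (gruGate_lt_one Wz Uz bz u x j).le)
    (fun j => (abs_gruCandidate_lt_one Wf Wr Uf Ur bf br u x j).le)
    zero_le_one zero_le_one (le_max_left ‖x‖ 1) (le_max_right ‖x‖ 1)
  linarith

lemma norm_gruStep_le_contraction {u : Fin nu → ℝ} {x : Fin nx → ℝ} {a B : ℝ} (hu : ‖u‖ ≤ a)
    (hx : ‖x‖ ≤ B) :
    ‖gruStep Wz Wf Wr Uz Uf Ur bz bf br u x‖ ≤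
      tanh (matNorm Wr * a + matNorm Ur * B + ‖br‖) +
        Real.sigmoid (matNorm Wz * a + matNorm Uz * B + ‖bz‖) *
          (max ‖x‖ 1 - tanh (matNorm Wr * a + matNorm Ur * B + ‖br‖)) := by
  have ha : 0 ≤ a := (norm_nonneg u).trans hu
  have hB : 0 ≤ B := (norm_nonneg x).trans hx
  have hρ : 0 ≤ tanh (matNorm Wr * a + matNorm Ur * B + ‖br‖) := Real.tanh_nonneg <|
    add_nonneg (add_nonneg (mul_nonneg (matNorm_nonneg Wr) ha) (mul_nonneg (matNorm_nonneg Ur) hB))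
      (norm_nonneg br)
  exact norm_gruStep_le_of_forall_le Wz Wf Wr Uz Uf Ur bz bf br (gruGate_le Wz Uz bz hu hx)
    (abs_gruCandidate_le Wf Wr Uf Ur bf br hu hx) (Real.sigmoid_nonneg _) hρ (le_max_left _ _)
    ((Real.tanh_lt_one _).le.trans (le_max_right _ _))

end GRUStep

lemma exists_forall_le_one_of_le_contraction {c ρ B : ℝ} (hc0 : 0 ≤ c) (hc1 : c < 1)
    (hρ : ρ < 1) :
    ∃ N : ℕ, ∀ v : ℕ → ℝ, v 0 ≤ B → (∀ k, v (k + 1) ≤ ρ + c * (max (v k) 1 - ρ)) →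
      ∀ k, N ≤ k → v k ≤ 1 := by
  set e₀ := max B 1 - ρ
  have hdecay : Tendsto (fun k => c ^ k * e₀) atTop (𝓝 0) := by
    simpa using (tendsto_pow_atTop_nhds_zero_of_lt_one hc0 hc1).mul_const e₀
  obtain ⟨N, hN⟩ := eventually_atTop.1 (hdecay.eventually (ge_mem_nhds (sub_pos.2 hρ)))
  refine ⟨N, fun v hv0 hv k hk => ?_⟩
  have hbound : ∀ k, max (v k) 1 ≤ ρ + max (c ^ k * e₀) (1 - ρ) := by
    intro k
    induction k with
    | zero =>
      have hv0' : max (v 0) 1 ≤ max B 1 := max_le_max_right 1 hv0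
      simp only [pow_zero, one_mul]
      linarith [le_max_left e₀ (1 - ρ)]
    | succ k ih =>
      have hmul : c * max (c ^ k * e₀) (1 - ρ) ≤ max (c ^ (k + 1) * e₀) (1 - ρ) := by
        rw [mul_max_of_nonneg _ _ hc0, pow_succ', mul_assoc]
        exact max_le_max le_rfl (by nlinarith)
      refine max_le ?_ (by linarith [le_max_right (c ^ (k + 1) * e₀) (1 - ρ)])
      nlinarith [hv k]
  have hvk := hbound k
  rw [max_eq_right (hN k hk)] at hvk
  exact (le_max_left _ _).trans (by linarith)

section GRUTrajectory

variable {nu nx : ℕ} (Wz Wf Wr : Matrix (Fin nx) (Fin nu) ℝ) (Uz Uf Ur : Matrix (Fin nx) (Fin nx) ℝ)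
  (bz bf br : Fin nx → ℝ)

lemma norm_le_max_of_gruStep {v : ℕ → Fin nu → ℝ} {x : ℕ → Fin nx → ℝ}
    (hx : ∀ k, x (k + 1) = gruStep Wz Wf Wr Uz Uf Ur bz bf br (v k) (x k)) (k : ℕ) :
    ‖x k‖ ≤ max ‖x 0‖ 1 := by
  induction k with
  | zero => exact le_max_left _ _
  | succ k ih =>
    rw [hx k]
    exact (norm_gruStep_le_max Wz Wf Wr Uz Uf Ur bz bf br _ _).trans (max_le ih (le_max_right _ _))

lemma exists_forall_norm_le_one_of_gruStep (a B : ℝ) :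
    ∃ N : ℕ, ∀ (v : ℕ → Fin nu → ℝ) (x : ℕ → Fin nx → ℝ), (∀ k, ‖v k‖ ≤ a) → ‖x 0‖ ≤ B →
      (∀ k, x (k + 1) = gruStep Wz Wf Wr Uz Uf Ur bz bf br (v k) (x k)) →
      ∀ k, N ≤ k → ‖x k‖ ≤ 1 := by
  obtain ⟨N, hN⟩ := exists_forall_le_one_of_le_contraction (B := B)
    (Real.sigmoid_nonneg (matNorm Wz * a + matNorm Uz * max B 1 + ‖bz‖))
    (Real.sigmoid_lt_one _) (Real.tanh_lt_one (matNorm Wr * a + matNorm Ur * max B 1 + ‖br‖))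
  refine ⟨N, fun v x hv hx0 hx => hN (fun k => ‖x k‖) hx0 fun k => ?_⟩
  rw [hx k]
  exact norm_gruStep_le_contraction Wz Wf Wr Uz Uf Ur bz bf br (hv k)
    ((norm_le_max_of_gruStep Wz Wf Wr Uz Uf Ur bz bf br hx k).trans (max_le_max_right 1 hx0))

end GRUTrajectory

section DeepGRU

variable {nu M : ℕ} {n : ℕ → ℕ}

def layerInput (u : ℕ → Fin nu → ℝ) (x : ℕ → ∀ i : ℕ, Fin (n i) → ℝ) (k : ℕ) :
    ∀ i : ℕ, Fin (inDim nu n i) → ℝ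
  | 0 => u k
  | i + 1 => x (k + 1) i

noncomputable def layerInputBound (xbar : ∀ i : ℕ, Fin (n i) → ℝ) : ℕ → ℝ
  | 0 => 1
  | i + 1 => max ‖xbar i‖ 1

variable (Wz Wf Wr : ∀ i : ℕ, Matrix (Fin (n i)) (Fin (inDim nu n i)) ℝ)
  (Uz Uf Ur : ∀ i : ℕ, Matrix (Fin (n i)) (Fin (n i)) ℝ) (bz bf br : ∀ i : ℕ, Fin (n i) → ℝ)
  {u : ℕ → Fin nu → ℝ} {x : ℕ → ∀ i : ℕ, Fin (n i) → ℝ}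

lemma deepGRU_succ_eq_gruStep_layerInput
    (h₀ : ∀ k, 0 < M → x (k + 1) 0 =
      gruStep (Wz 0) (Wf 0) (Wr 0) (Uz 0) (Uf 0) (Ur 0) (bz 0) (bf 0) (br 0) (u k) (x k 0))
    (hsucc : ∀ k, ∀ i : ℕ, i + 1 < M → x (k + 1) (i + 1) =
      gruStep (Wz (i + 1)) (Wf (i + 1)) (Wr (i + 1)) (Uz (i + 1)) (Uf (i + 1))
        (Ur (i + 1)) (bz (i + 1)) (bf (i + 1)) (br (i + 1)) (x (k + 1) i) (x k (i + 1)))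
    (k : ℕ) {i : ℕ} (hi : i < M) :
    x (k + 1) i = gruStep (Wz i) (Wf i) (Wr i) (Uz i) (Uf i) (Ur i) (bz i) (bf i) (br i)
      (layerInput u x k i) (x k i) := by
  cases i with
  | zero => exact h₀ k hi
  | succ i => exact hsucc k i hi

lemma norm_layerInput_le (hu : ∀ t, ‖u t‖ ≤ 1)
    (hx : ∀ k, ∀ i < M, x (k + 1) i = gruStep (Wz i) (Wf i) (Wr i) (Uz i) (Uf i) (Ur i) (bz i)
      (bf i) (br i) (layerInput u x k i) (x k i))
    {i : ℕ} (hi : i < M) (k : ℕ) :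
    ‖layerInput u x k i‖ ≤ layerInputBound (x 0) i := by
  cases i with
  | zero => exact hu k
  | succ i =>
    exact norm_le_max_of_gruStep (Wz i) (Wf i) (Wr i) (Uz i) (Uf i) (Ur i) (bz i) (bf i) (br i)
      (v := fun k => layerInput u x k i) (x := fun k => x k i)
      (fun k => hx k i (Nat.lt_of_succ_lt hi)) (k + 1)

end DeepGRU

/-- **Lemma 4 (finite-time convergence for deep GRUs).**
(a) For each layer `i` and each time `k` with `‖x^i(k)‖_∞ > 1`, the layer norm strictly
decreases; (b) there is a finite `k̄` depending only on the initial states and the weights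
(not on the input sequence) such that `‖x^i(k)‖_∞ ≤ 1` for all layers `i` and `k ≥ k̄`. -/
theorem deep_gru_finite_time_convergence {nu M : ℕ} {n : ℕ → ℕ}
    (Wz Wf Wr : ∀ i : ℕ, Matrix (Fin (n i)) (Fin (inDim nu n i)) ℝ)
    (Uz Uf Ur : ∀ i : ℕ, Matrix (Fin (n i)) (Fin (n i)) ℝ)
    (bz bf br : ∀ i : ℕ, Fin (n i) → ℝ)
    (xbar : ∀ i : ℕ, Fin (n i) → ℝ) :
    (∀ u : ℕ → Fin nu → ℝ, (∀ t, ‖u t‖ ≤ 1) →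
      ∀ x : ℕ → ∀ i : ℕ, Fin (n i) → ℝ, x 0 = xbar →
        (∀ k, 0 < M → x (k + 1) 0 =
          gruStep (Wz 0) (Wf 0) (Wr 0) (Uz 0) (Uf 0) (Ur 0) (bz 0) (bf 0) (br 0)
            (u k) (x k 0)) →
        (∀ k, ∀ i : ℕ, i + 1 < M → x (k + 1) (i + 1) =
          gruStep (Wz (i + 1)) (Wf (i + 1)) (Wr (i + 1)) (Uz (i + 1)) (Uf (i + 1))
            (Ur (i + 1)) (bz (i + 1)) (bf (i + 1)) (br (i + 1))
            (x (k + 1) i) (x k (i + 1))) →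
        ∀ i < M, ∀ k, 1 < ‖x k i‖ → ‖x (k + 1) i‖ < ‖x k i‖) ∧
    (∃ kbar : ℕ, ∀ u : ℕ → Fin nu → ℝ, (∀ t, ‖u t‖ ≤ 1) →
      ∀ x : ℕ → ∀ i : ℕ, Fin (n i) → ℝ, x 0 = xbar →
        (∀ k, 0 < M → x (k + 1) 0 =
          gruStep (Wz 0) (Wf 0) (Wr 0) (Uz 0) (Uf 0) (Ur 0) (bz 0) (bf 0) (br 0)
            (u k) (x k 0)) →
        (∀ k, ∀ i : ℕ, i + 1 < M → x (k + 1) (i + 1) =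
          gruStep (Wz (i + 1)) (Wf (i + 1)) (Wr (i + 1)) (Uz (i + 1)) (Uf (i + 1))
            (Ur (i + 1)) (bz (i + 1)) (bf (i + 1)) (br (i + 1))
            (x (k + 1) i) (x k (i + 1))) →
        ∀ i < M, ∀ k, kbar ≤ k → ‖x k i‖ ≤ 1) := by
  refine ⟨fun u _ x _ h₀ hsucc i hi k hk => ?_, ?_⟩
  · rw [deepGRU_succ_eq_gruStep_layerInput Wz Wf Wr Uz Uf Ur bz bf br h₀ hsucc k hi]
    exact norm_gruStep_lt _ _ _ _ _ _ _ _ _ _ hk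
  · choose N hN using fun i => exists_forall_norm_le_one_of_gruStep (Wz i) (Wf i) (Wr i) (Uz i)
      (Uf i) (Ur i) (bz i) (bf i) (br i) (layerInputBound xbar i) ‖xbar i‖
    refine ⟨(Finset.range M).sup N, fun u hu x hx0 h₀ hsucc i hi k hk => ?_⟩
    have hstep := fun k i (hi : i < M) =>
      deepGRU_succ_eq_gruStep_layerInput Wz Wf Wr Uz Uf Ur bz bf br h₀ hsucc k hi
    refine hN i (fun k => layerInput u x k i) (fun k => x k i) (fun k => ?_) (by rw [hx0])
      (fun k => hstep k i hi) k ((Finset.le_sup (Finset.mem_range.2 hi)).trans hk)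
    exact hx0 ▸ norm_layerInput_le Wz Wf Wr Uz Uf Ur bz bf br hu hstep hi k
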